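/- Suppose v is a positive C² solution of (Φ'(v'))' − f(v')/v + A v^{−m} = λ on an interval where v' ≠ 0, with f(z) = (1+z²)^{−1/2}, Φ'(z) = z f(z), m > 2, A ≥ 0, λ ∈ ℝ. Then the quantity v·f(v') + (A/(m−2)) v^{2−m} + (λ/2) v² is constant along the solution; equivalently f(v') = (A/(2−m)) v^{1−m} − (λ/2) v + C₀ v^{−1} for some constant C₀. -/

import Mathlib

/-! Since `f'(z) = -z f(z)³`, the equation multiplied by `v v'` reads
`(v f(v'))' = (A v^(1-m) - λ v) v'`, and the right-hand side is the derivative of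
`-(A/(m-2)) v^(2-m) - (λ/2) v²`. Dividing the resulting conserved quantity by `v` gives the
formula for `f(v')`. -/

noncomputable def f (z : ℝ) : ℝ := (Real.sqrt (1 + z ^ 2))⁻¹

lemma hasDerivAt_f (z : ℝ) : HasDerivAt f (-(z * f z ^ 3)) z := by
  have hsqrt_pos : 0 < Real.sqrt (1 + z ^ 2) := Real.sqrt_pos.2 (by positivity)
  have hsqrt : HasDerivAt (fun z : ℝ => Real.sqrt (1 + z ^ 2))
      (2 * z / (2 * Real.sqrt (1 + z ^ 2))) z := by
    simpa using ((hasDerivAt_pow 2 z).const_add 1).sqrt (by positivity)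
  refine (hsqrt.inv hsqrt_pos.ne').congr_deriv ?_
  have hsq : Real.sqrt (1 + z ^ 2) ^ 2 = 1 + z ^ 2 := Real.sq_sqrt (by positivity)
  simp only [f]
  field_simp

noncomputable def firstIntegral (A m lam : ℝ) (v v' : ℝ → ℝ) (x : ℝ) : ℝ :=
  v x * f (v' x) + (A / (m - 2)) * (v x) ^ (2 - m) + (lam / 2) * (v x) ^ 2

lemma hasDerivAt_firstIntegral {A m lam x : ℝ} {v v' : ℝ → ℝ} {v'' : ℝ}
    (hm : m ≠ 2) (hvx : v x ≠ 0) (hv : HasDerivAt v (v' x) x) (hv' : HasDerivAt v' v'' x)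
    (hODE : f (v' x) ^ 3 * v'' - f (v' x) / v x + A * (v x) ^ (-m) = lam) :
    HasDerivAt (firstIntegral A m lam v v') 0 x := by
  have hD := ((hv.mul ((hasDerivAt_f (v' x)).comp x hv')).add
    ((hv.rpow_const (p := 2 - m) (Or.inl hvx)).const_mul (A / (m - 2)))).add
    ((hv.pow 2).const_mul (lam / 2))
  refine hD.congr_deriv ?_
  have hkey : v x * (f (v' x) ^ 3 * v'') = lam * v x + f (v' x) - A * v x ^ (1 - m) := by
    rw [show (1 : ℝ) - m = -m + 1 by ring, Real.rpow_add_one hvx, ← hODE]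
    field_simp
    ring
  have hm2 : (m - 2) * (m - 2)⁻¹ = 1 := mul_inv_cancel₀ (sub_ne_zero.2 hm)
  rw [Function.comp_apply, show (2 : ℝ) - m - 1 = 1 - m by ring]
  linear_combination -v' x * hkey - (A * v x ^ (1 - m) * v' x) * hm2

lemma f_eq_of_firstIntegral_eq {A m lam x c : ℝ} {v v' : ℝ → ℝ}
    (hm : m ≠ 2) (hvx : v x ≠ 0) (h : firstIntegral A m lam v v' x = c) :
    f (v' x) = (A / (2 - m)) * (v x) ^ (1 - m) - (lam / 2) * v x + c * (v x)⁻¹ := by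
  rw [firstIntegral, show (2 : ℝ) - m = (1 - m) + 1 by ring, Real.rpow_add_one hvx] at h
  rw [← h]
  have h2m : (2 : ℝ) - m ≠ 0 := sub_ne_zero.2 (Ne.symm hm)
  have hm2 : m - 2 ≠ 0 := sub_ne_zero.2 hm
  field_simp
  ring

theorem stmt_14_general (a b m A lam : ℝ) (hm : 2 < m)
    (v v' v'' : ℝ → ℝ)
    (hv : ∀ x ∈ Set.Ioo a b, HasDerivAt v (v' x) x)
    (hv' : ∀ x ∈ Set.Ioo a b, HasDerivAt v' (v'' x) x)
    (hpos : ∀ x ∈ Set.Ioo a b, 0 < v x)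
    (hODE : ∀ x ∈ Set.Ioo a b,
      f (v' x) ^ 3 * v'' x - f (v' x) / v x + A * (v x) ^ (-m) = lam) :
    (∃ c : ℝ, ∀ x ∈ Set.Ioo a b,
      v x * f (v' x) + (A / (m - 2)) * (v x) ^ (2 - m) + (lam / 2) * (v x) ^ 2 = c) ∧
    (∃ C₀ : ℝ, ∀ x ∈ Set.Ioo a b,
      f (v' x) = (A / (2 - m)) * (v x) ^ (1 - m) - (lam / 2) * v x + C₀ * (v x)⁻¹) := by
  have hderiv : ∀ x ∈ Set.Ioo a b, HasDerivAt (firstIntegral A m lam v v') 0 x := fun x hx =>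
    hasDerivAt_firstIntegral hm.ne' (hpos x hx).ne' (hv x hx) (hv' x hx) (hODE x hx)
  obtain ⟨c, hc⟩ := isOpen_Ioo.exists_is_const_of_deriv_eq_zero isPreconnected_Ioo
    (fun x hx => (hderiv x hx).differentiableAt.differentiableWithinAt)
    (fun x hx => (hderiv x hx).deriv)
  exact ⟨⟨c, hc⟩, ⟨c, fun x hx => f_eq_of_firstIntegral_eq hm.ne' (hpos x hx).ne' (hc x hx)⟩⟩

theorem stmt_14 (a b m A lam : ℝ) (hab : a < b) (hm : 2 < m) (hA : 0 ≤ A)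
    (v v' v'' : ℝ → ℝ)
    (hv : ∀ x ∈ Set.Ioo a b, HasDerivAt v (v' x) x)
    (hv' : ∀ x ∈ Set.Ioo a b, HasDerivAt v' (v'' x) x)
    (hpos : ∀ x ∈ Set.Ioo a b, 0 < v x)
    (hne : ∀ x ∈ Set.Ioo a b, v' x ≠ 0)
    (hODE : ∀ x ∈ Set.Ioo a b,
      f (v' x) ^ 3 * v'' x - f (v' x) / v x + A * (v x) ^ (-m) = lam) :
    (∃ c : ℝ, ∀ x ∈ Set.Ioo a b,
      v x * f (v' x) + (A / (m - 2)) * (v x) ^ (2 - m) + (lam / 2) * (v x) ^ 2 = c) ∧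
    (∃ C₀ : ℝ, ∀ x ∈ Set.Ioo a b,
      f (v' x) = (A / (2 - m)) * (v x) ^ (1 - m) - (lam / 2) * v x + C₀ * (v x)⁻¹) :=
  stmt_14_general a b m A lam hm v v' v'' hv hv' hpos hODE
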